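/- In each fixed degree n, the coefficients of the generating series Ψ_γ satisfy the shuffle identity: the coefficient of A_{i₁}⋯A_{i_{m'}} times the coefficient of A_{j₁}⋯A_{j_{m''}} equals the sum over (m',m'')-shuffles of the corresponding coefficients of shuffled words. Equivalently, the linear map sending a word w = A_{i₁}⋯A_{i_n} to ∫_γ ω_{i₁}⋯ω_{i_n} is an algebra homomorphism from the shuffle algebra on the alphabet {A₁,…,A_m} to ℝ. -/

import Mathlib

open MeasureTheory

/-- The open ordered simplex `{0 < t₁ < ⋯ < t_n < 1}` in `ℝⁿ`. -/
def simplex (n : ℕ) : Set (Fin n → ℝ) :=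
  {t | (∀ i, t i ∈ Set.Ioo (0 : ℝ) 1) ∧ StrictMono t}

/-- The iterated integral `∫_{0<t₁<⋯<t_n<1} f₁(t₁)⋯f_n(t_n) dt₁⋯dt_n`. -/
noncomputable def iint (n : ℕ) (f : Fin n → ℝ → ℝ) : ℝ :=
  ∫ t in simplex n, ∏ i, f i (t i)

/-- An `(m',m'')`-shuffle. -/
def IsShuffle (m' m'' : ℕ) (ρ : Equiv.Perm (Fin (m' + m''))) : Prop :=
  (∀ i j : Fin m', i < j → ρ (Fin.castAdd m'' i) < ρ (Fin.castAdd m'' j)) ∧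
  (∀ i j : Fin m'', i < j → ρ (Fin.natAdd m' i) < ρ (Fin.natAdd m' j))

instance (m' m'' : ℕ) : DecidablePred (IsShuffle m' m'') := fun ρ => by
  unfold IsShuffle; infer_instance

/-- The value on a word `w = A_{l₁}⋯A_{l_n}` of the iterated-integral functional
`w ↦ ∫_γ ω_{l₁}⋯ω_{l_n}`, via the pullbacks `γ*ω_i(t) = ω_i(γ(t))(γ'(t)) dt`. -/
noncomputable def Phi {d m : ℕ}
    (ω : Fin m → EuclideanSpace ℝ (Fin d) → (EuclideanSpace ℝ (Fin d) →L[ℝ] ℝ))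
    (γ : ℝ → EuclideanSpace ℝ (Fin d)) (l : List (Fin m)) : ℝ :=
  iint l.length (fun i t => ω (l.get i) (γ t) (deriv γ t))

lemma isOpen_simplex (n : ℕ) : IsOpen (simplex n) := by
  have h : simplex n =
      (⋂ i : Fin n, ({t : Fin n → ℝ | 0 < t i} ∩ {t | t i < 1})) ∩
      ⋂ i : Fin n, ⋂ j : Fin n, {t : Fin n → ℝ | i < j → t i < t j} := by
    ext t
    simp only [simplex, Set.mem_setOf_eq, Set.mem_inter_iff, Set.mem_iInter, Set.mem_Ioo,
      StrictMono]
  rw [h]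
  refine IsOpen.inter (isOpen_iInter_of_finite fun i => ?_)
    (isOpen_iInter_of_finite fun i => isOpen_iInter_of_finite fun j => ?_)
  · exact (isOpen_lt continuous_const (continuous_apply i)).inter
      (isOpen_lt (continuous_apply i) continuous_const)
  · by_cases hij : i < j
    · simp only [hij, forall_true_left]
      exact isOpen_lt (continuous_apply i) (continuous_apply j)
    · have : {t : Fin n → ℝ | i < j → t i < t j} = Set.univ := by
        ext t; simp [hij]
      rw [this]; exact isOpen_univ

lemma simplex_subset_Icc (n : ℕ) : simplex n ⊆ Set.Icc (0 : Fin n → ℝ) 1 := by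
  rintro t ⟨h1, -⟩
  constructor <;> intro i
  · exact (h1 i).1.le
  · exact (h1 i).2.le

section Abstract

variable {p q : ℕ}

/-- The sum-index equiv used to interleave. -/
def shEquiv (p q : ℕ) (ρ : Equiv.Perm (Fin (p + q))) : (Fin p ⊕ Fin q) ≃ Fin (p + q) :=
  finSumFinEquiv.trans ρ

/-- The measurable equiv splitting `ℝ^{p+q}` according to the shuffle `ρ`. -/
noncomputable def shMap (p q : ℕ) (ρ : Equiv.Perm (Fin (p + q))) :
    (Fin (p + q) → ℝ) ≃ᵐ (Fin p → ℝ) × (Fin q → ℝ) :=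
  (MeasurableEquiv.piCongrLeft (fun _ : Fin p ⊕ Fin q => ℝ) (shEquiv p q ρ).symm).trans
    (MeasurableEquiv.sumPiEquivProdPi fun _ : Fin p ⊕ Fin q => ℝ)

lemma shMap_apply (ρ : Equiv.Perm (Fin (p + q))) (t : Fin (p + q) → ℝ) :
    shMap p q ρ t =
      (fun i => t (ρ (Fin.castAdd q i)), fun j => t (ρ (Fin.natAdd p j))) := by
  have key : ∀ x : Fin p ⊕ Fin q,
      (MeasurableEquiv.piCongrLeft (fun _ : Fin p ⊕ Fin q => ℝ) (shEquiv p q ρ).symm) t x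
        = t (shEquiv p q ρ x) := by
    intro x
    conv_lhs => rw [show x = (shEquiv p q ρ).symm (shEquiv p q ρ x) from
      ((shEquiv p q ρ).symm_apply_apply x).symm]
    exact Equiv.piCongrLeft_apply_apply (fun _ => ℝ) (shEquiv p q ρ).symm t _
  refine Prod.ext ?_ ?_
  · funext x
    show (MeasurableEquiv.piCongrLeft (fun _ : Fin p ⊕ Fin q => ℝ) (shEquiv p q ρ).symm) t
      (Sum.inl x) = _
    rw [key]
    simp [shEquiv]
  · funext x
    show (MeasurableEquiv.piCongrLeft (fun _ : Fin p ⊕ Fin q => ℝ) (shEquiv p q ρ).symm) t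
      (Sum.inr x) = _
    rw [key]
    simp [shEquiv]

lemma shMap_measurePreserving (ρ : Equiv.Perm (Fin (p + q))) :
    MeasurePreserving (shMap p q ρ) volume volume := by
  have h1 := volume_measurePreserving_piCongrLeft (fun _ : Fin p ⊕ Fin q => ℝ)
    (shEquiv p q ρ).symm
  have h2 := volume_measurePreserving_sumPiEquivProdPi (fun _ : Fin p ⊕ Fin q => ℝ)
  exact h2.comp h1

/-- Image of the big simplex under the shuffle map. -/
noncomputable def shSet (p q : ℕ) (ρ : Equiv.Perm (Fin (p + q))) :
    Set ((Fin p → ℝ) × (Fin q → ℝ)) :=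
  shMap p q ρ '' simplex (p + q)

lemma shSet_subset {ρ : Equiv.Perm (Fin (p + q))} (hρ : IsShuffle p q ρ) :
    shSet p q ρ ⊆ simplex p ×ˢ simplex q := by
  rintro x ⟨t, ht, rfl⟩
  rw [shMap_apply]
  refine ⟨⟨fun i => ht.1 _, fun i j hij => ht.2 (hρ.1 i j hij)⟩,
    ⟨fun j => ht.1 _, fun i j hij => ht.2 (hρ.2 i j hij)⟩⟩

lemma shSet_disjoint {ρ ρ' : Equiv.Perm (Fin (p + q))} (hne : ρ ≠ ρ') :
    Disjoint (shSet p q ρ) (shSet p q ρ') := by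
  rw [Set.disjoint_left]
  rintro x ⟨t, ht, rfl⟩ ⟨t', ht', hx⟩
  -- from shMap equality deduce t ∘ ρ = t' ∘ ρ'
  have h1 : ∀ i : Fin p, t' (ρ' (Fin.castAdd q i)) = t (ρ (Fin.castAdd q i)) := by
    intro i
    have := congrArg (fun z => z.1 i) hx
    simpa [shMap_apply] using this
  have h2 : ∀ j : Fin q, t' (ρ' (Fin.natAdd p j)) = t (ρ (Fin.natAdd p j)) := by
    intro j
    have := congrArg (fun z => z.2 j) hx
    simpa [shMap_apply] using this
  have hc : (t ∘ ρ) = (t' ∘ ρ') := by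
    funext k
    induction k using Fin.addCases with
    | left i => exact (h1 i).symm
    | right j => exact (h2 j).symm
  have e1 : (t ∘ ⇑ρ) ∘ ⇑(ρ⁻¹) = t := by funext k; simp
  have e2 : (t ∘ ⇑ρ) ∘ ⇑(ρ'⁻¹) = t' := by rw [hc]; funext k; simp
  have htt' : t = t' := by
    rw [← e1, ← e2]
    exact Tuple.unique_monotone (by rw [e1]; exact ht.2.monotone)
      (by rw [e2]; exact ht'.2.monotone)
  have hcomp : t ∘ ⇑ρ = t ∘ ⇑ρ' := hc.trans (by rw [htt'])
  apply hne
  ext k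
  exact congrArg Fin.val (ht.2.injective (congrFun hcomp k))

lemma shSet_cover {x : (Fin p → ℝ) × (Fin q → ℝ)}
    (hx : x ∈ simplex p ×ˢ simplex q)
    (hd : ∀ (i : Fin p) (j : Fin q), x.1 i ≠ x.2 j) :
    ∃ ρ, IsShuffle p q ρ ∧ x ∈ shSet p q ρ := by
  obtain ⟨a, b⟩ := x
  obtain ⟨ha, hb⟩ := hx
  set c : Fin (p + q) → ℝ := Fin.append a b with hcdef
  have hcinj : Function.Injective c := by
    intro k k' hkk'
    induction k using Fin.addCases with
    | left i =>
      induction k' using Fin.addCases with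
      | left i' =>
        simp only [hcdef, Fin.append_left] at hkk'
        rw [ha.2.injective hkk']
      | right j' =>
        simp only [hcdef, Fin.append_left, Fin.append_right] at hkk'
        exact absurd hkk' (hd i j')
    | right j =>
      induction k' using Fin.addCases with
      | left i' =>
        simp only [hcdef, Fin.append_left, Fin.append_right] at hkk'
        exact absurd hkk'.symm (hd i' j)
      | right j' =>
        simp only [hcdef, Fin.append_right] at hkk'
        rw [hb.2.injective hkk']
  set σ := Tuple.sort c with hσ
  have hmono : Monotone (c ∘ σ) := Tuple.monotone_sort c
  have hsm : StrictMono (c ∘ σ) :=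
    hmono.strictMono_of_injective (hcinj.comp σ.injective)
  have hcIoo : ∀ k, c k ∈ Set.Ioo (0:ℝ) 1 := by
    intro k
    induction k using Fin.addCases with
    | left i => simpa [hcdef, Fin.append_left] using ha.1 i
    | right j => simpa [hcdef, Fin.append_right] using hb.1 j
  refine ⟨σ⁻¹, ⟨?_, ?_⟩, (fun k => c (σ k)), ⟨fun k => hcIoo (σ k), hsm⟩, ?_⟩
  · intro i j hij
    have : c (σ (σ⁻¹ (Fin.castAdd q i))) < c (σ (σ⁻¹ (Fin.castAdd q j))) := by
      simp only [Equiv.Perm.inv_def, Equiv.apply_symm_apply, hcdef, Fin.append_left]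
      exact ha.2 hij
    exact hsm.lt_iff_lt.mp this
  · intro i j hij
    have : c (σ (σ⁻¹ (Fin.natAdd p i))) < c (σ (σ⁻¹ (Fin.natAdd p j))) := by
      simp only [Equiv.Perm.inv_def, Equiv.apply_symm_apply, hcdef, Fin.append_right]
      exact hb.2 hij
    exact hsm.lt_iff_lt.mp this
  · rw [shMap_apply]
    refine Prod.ext ?_ ?_
    · funext i
      simp [hcdef, Fin.append_left, Equiv.Perm.inv_def, Equiv.apply_symm_apply]
    · funext j
      simp [hcdef, Fin.append_right, Equiv.Perm.inv_def, Equiv.apply_symm_apply]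

end Abstract

section Integrals

variable {p q : ℕ}

lemma measurableSet_shSet (ρ : Equiv.Perm (Fin (p + q))) : MeasurableSet (shSet p q ρ) :=
  (shMap p q ρ).measurableEmbedding.measurableSet_image.2 (isOpen_simplex _).measurableSet

lemma null_diag (i : Fin p) (j : Fin q) :
    volume {x : (Fin p → ℝ) × (Fin q → ℝ) | x.1 i = x.2 j} = 0 := by
  haveI : (volume : Measure ((Fin p → ℝ) × (Fin q → ℝ))).IsAddHaarMeasure := by
    rw [Measure.volume_eq_prod]; exact Measure.prod.instIsAddHaarMeasure _ _
  set L : ((Fin p → ℝ) × (Fin q → ℝ)) →ₗ[ℝ] ℝ :=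
    (LinearMap.proj i).comp (LinearMap.fst ℝ (Fin p → ℝ) (Fin q → ℝ)) -
      (LinearMap.proj j).comp (LinearMap.snd ℝ (Fin p → ℝ) (Fin q → ℝ)) with hL
  have hset : {x : (Fin p → ℝ) × (Fin q → ℝ) | x.1 i = x.2 j} = (LinearMap.ker L : Set _) := by
    ext x
    simp [hL, LinearMap.mem_ker, sub_eq_zero]
  rw [hset]
  apply MeasureTheory.Measure.addHaar_submodule
  intro htop
  have h1 : L ((fun _ => (1:ℝ)), (0 : Fin q → ℝ)) = 1 := by simp [hL]
  have h0 : L ((fun _ => (1:ℝ)), (0 : Fin q → ℝ)) = 0 := by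
    have : ((fun _ => (1:ℝ)), (0 : Fin q → ℝ)) ∈ LinearMap.ker L := by
      rw [htop]; trivial
    simpa [LinearMap.mem_ker] using this
  rw [h1] at h0
  exact one_ne_zero h0

theorem iint_mul_iint (f : Fin p → ℝ → ℝ) (g : Fin q → ℝ → ℝ)
    (hf : ∀ i, Continuous (f i)) (hg : ∀ j, Continuous (g j)) :
    iint p f * iint q g = ∑ ρ ∈ Finset.univ.filter (IsShuffle p q),
      iint (p + q) (fun i t => Fin.append f g (ρ.symm i) t) := by
  classical
  haveI : (volume : Measure ((Fin p → ℝ) × (Fin q → ℝ))).IsAddHaarMeasure := by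
    rw [Measure.volume_eq_prod]; exact Measure.prod.instIsAddHaarMeasure _ _
  set φ : (Fin p → ℝ) × (Fin q → ℝ) → ℝ :=
    fun x => (∏ i, f i (x.1 i)) * ∏ j, g j (x.2 j) with hφ
  have hφc : Continuous φ := by
    refine Continuous.mul ?_ ?_
    · exact continuous_finset_prod _ fun i _ =>
        (hf i).comp ((continuous_apply i).comp continuous_fst)
    · exact continuous_finset_prod _ fun j _ =>
        (hg j).comp ((continuous_apply j).comp continuous_snd)
  have hK : IsCompact ((Set.Icc (0 : Fin p → ℝ) 1) ×ˢ (Set.Icc (0 : Fin q → ℝ) 1)) :=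
    isCompact_Icc.prod isCompact_Icc
  have hint : IntegrableOn φ (simplex p ×ˢ simplex q) volume :=
    (hφc.continuousOn.integrableOn_compact hK).mono_set
      (Set.prod_mono (simplex_subset_Icc p) (simplex_subset_Icc q))
  have step1 : iint p f * iint q g = ∫ x in simplex p ×ˢ simplex q, φ x := by
    unfold iint
    simp only [hφ]
    rw [Measure.volume_eq_prod (Fin p → ℝ) (Fin q → ℝ)]
    exact (setIntegral_prod_mul (μ := (volume : Measure (Fin p → ℝ)))
      (ν := (volume : Measure (Fin q → ℝ))) (fun a => ∏ i, f i (a i))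
      (fun b => ∏ j, g j (b j)) (simplex p) (simplex q)).symm
  have step2 : ∀ ρ ∈ Finset.univ.filter (IsShuffle p q),
      iint (p + q) (fun i t => Fin.append f g (ρ.symm i) t) = ∫ x in shSet p q ρ, φ x := by
    intro ρ _
    unfold iint shSet
    rw [(shMap_measurePreserving ρ).setIntegral_image_emb
      (shMap p q ρ).measurableEmbedding φ (simplex (p + q))]
    congr 1
    funext t
    rw [shMap_apply, hφ]
    rw [← Equiv.prod_comp ρ (fun i => Fin.append f g (ρ.symm i) (t i))]
    simp only [Equiv.symm_apply_apply]
    rw [Fin.prod_univ_add]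
    simp [Fin.append_left, Fin.append_right]
  set sh := Finset.univ.filter (IsShuffle p q) with hsh
  have hmeas : ∀ ρ ∈ sh, MeasurableSet (shSet p q ρ) := fun ρ _ => measurableSet_shSet ρ
  have hdisj : Set.Pairwise ↑sh (Function.onFun Disjoint (shSet p q)) :=
    fun ρ _ ρ' _ hne => shSet_disjoint hne
  have hintU : ∀ ρ ∈ sh, IntegrableOn φ (shSet p q ρ) volume := fun ρ hρ =>
    hint.mono_set (shSet_subset (Finset.mem_filter.mp hρ).2)
  have step3 : ∫ x in ⋃ ρ ∈ sh, shSet p q ρ, φ x = ∑ ρ ∈ sh, ∫ x in shSet p q ρ, φ x :=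
    integral_biUnion_finset sh hmeas hdisj hintU
  have hUsub : (⋃ ρ ∈ sh, shSet p q ρ) ⊆ simplex p ×ˢ simplex q := by
    refine Set.iUnion₂_subset fun ρ hρ => shSet_subset (Finset.mem_filter.mp hρ).2
  have hDnull : volume ((simplex p ×ˢ simplex q) \ ⋃ ρ ∈ sh, shSet p q ρ) = 0 := by
    apply measure_mono_null
      (show ((simplex p ×ˢ simplex q) \ ⋃ ρ ∈ sh, shSet p q ρ) ⊆
        ⋃ (i : Fin p), ⋃ (j : Fin q), {x : (Fin p → ℝ) × (Fin q → ℝ) | x.1 i = x.2 j} from ?_)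
    · exact measure_iUnion_null fun i => measure_iUnion_null fun j => null_diag i j
    · rintro x ⟨hx, hnx⟩
      by_contra hxD
      simp only [Set.mem_iUnion, Set.mem_setOf_eq, not_exists] at hxD
      obtain ⟨ρ, hρ, hmem⟩ := shSet_cover hx hxD
      exact hnx (Set.mem_biUnion (Finset.mem_filter.mpr ⟨Finset.mem_univ _, hρ⟩) hmem)
  have haeeq : (⋃ ρ ∈ sh, shSet p q ρ) =ᵐ[volume] (simplex p ×ˢ simplex q : Set _) := by
    rw [MeasureTheory.ae_eq_set]
    constructor
    · rw [Set.diff_eq_empty.mpr hUsub]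
      exact measure_empty
    · exact hDnull
  rw [step1, ← setIntegral_congr_set haeeq, step3]
  exact Finset.sum_congr rfl fun ρ hρ => (step2 ρ hρ).symm

end Integrals

/-- The word-to-iterated-integral map is an algebra homomorphism from the shuffle
algebra on the alphabet `{A₁,…,A_m}` to `ℝ`: for any two words `u`, `v`,
`Φ(u)·Φ(v) = Σ_{ρ ∈ Sh(|u|,|v|)} Φ((u·v) ∘ ρ⁻¹)`. -/
theorem Phi_shuffle_hom {d m : ℕ}
    (ω : Fin m → EuclideanSpace ℝ (Fin d) → (EuclideanSpace ℝ (Fin d) →L[ℝ] ℝ))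
    (hω : ∀ i, Continuous (ω i))
    (γ : ℝ → EuclideanSpace ℝ (Fin d)) (hγ : ContDiff ℝ 1 γ)
    (u v : List (Fin m)) :
    Phi ω γ u * Phi ω γ v =
      ∑ ρ ∈ Finset.univ.filter (IsShuffle u.length v.length),
        iint (u.length + v.length)
          (fun i t =>
            ω ((u ++ v).get (Fin.cast List.length_append.symm (ρ.symm i)))
              (γ t) (deriv γ t)) := by
  have hcont : ∀ k : Fin m, Continuous (fun t => ω k (γ t) (deriv γ t)) := fun k =>
    ((hω k).comp hγ.continuous).clm_apply (hγ.continuous_deriv le_rfl)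
  have key := iint_mul_iint (fun i t => ω (u.get i) (γ t) (deriv γ t))
    (fun j t => ω (v.get j) (γ t) (deriv γ t))
    (fun i => hcont _) (fun j => hcont _)
  unfold Phi
  rw [key]
  refine Finset.sum_congr rfl fun ρ _ => ?_
  congr 1
  funext i t
  generalize ρ.symm i = k
  induction k using Fin.addCases with
  | left i0 =>
    rw [Fin.append_left]
    congr 2
    simp only [List.get_eq_getElem, Fin.coe_cast, Fin.coe_castAdd]
    exact (List.getElem_append_left i0.isLt).symm
  | right j0 =>
    rw [Fin.append_right]
    congr 2
    simp only [List.get_eq_getElem, Fin.coe_cast, Fin.coe_natAdd]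
    rw [List.getElem_append_right (by omega)]
    congr 1
    omega
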